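/- arXiv:2002.11525 — 6 statements merged into one kernel-verified Lean document; each statement's English description precedes it below -/
import Mathlib

section
/- There exists a magic 24-cell: a bijection f from the 24 vertices of the 24-cell onto {1, 2, …, 24} such that for every one of the 24 octahedral cells, the sum of the labels of its six vertices equals 75. -/
open Finset

/-- The 24 vertices of the 24-cell: vectors in `ℤ⁴` with coordinates in `{-1,0,1}`
and sum of squares equal to `2` (i.e. the coordinate permutations of `(±1,±1,0,0)`). -/
def V24 : Finset (Fin 4 → ℤ) :=
  (Fintype.piFinset fun _ => ({-1, 0, 1} : Finset ℤ)).filter fun v => ∑ i, (v i) ^ 2 = 2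

/-- A cell center of the 24-cell: one of the 16 vectors `(±1,±1,±1,±1)` or
the 8 vectors `±2eᵢ`. -/
def IsCenter (c : Fin 4 → ℤ) : Prop :=
  (∀ i, c i = 1 ∨ c i = -1) ∨ ∃ i, (c i = 2 ∨ c i = -2) ∧ ∀ j, j ≠ i → c j = 0

instance : DecidablePred IsCenter := fun c => by unfold IsCenter; infer_instance

/-- The 24 cell centers of the 24-cell. -/
def Centers24 : Finset (Fin 4 → ℤ) :=
  (Fintype.piFinset fun _ => ({-2, -1, 0, 1, 2} : Finset ℤ)).filter IsCenter

/-- The octahedral cell with center `c`: the set of vertices `v` with `⟨v, c⟩ = 2`. -/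
def cell (c : Fin 4 → ℤ) : Finset (Fin 4 → ℤ) :=
  V24.filter fun v => ∑ i, v i * c i = 2


def gLab (n : ℤ) : ℤ :=
  if n = -36 then 22 else if n = -30 then 24 else if n = -28 then 4 else if n = -26 then 2 else if n = -24 then 18 else if n = -18 then 5 else if n = -12 then 6 else if n = -10 then 8 else if n = -8 then 9 else if n = -6 then 10 else if n = -4 then 11 else if n = -2 then 12 else if n = 2 then 13 else if n = 4 then 14 else if n = 6 then 15 else if n = 8 then 16 else if n = 10 then 17 else if n = 12 then 19 else if n = 18 then 20 else if n = 24 then 7 else if n = 26 then 23 else if n = 28 then 21 else if n = 30 then 1 else if n = 36 then 3 else 0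

def fLab (v : Fin 4 → ℤ) : ℤ := gLab (27 * v 0 + 9 * v 1 + 3 * v 2 + v 3)

lemma img : V24.image fLab = Finset.Icc (1 : ℤ) 24 := by decide

lemma cards : V24.card = 24 := by decide

/-- There exists a magic 24-cell: a bijection from the 24 vertices onto `{1, …, 24}`
such that every octahedral cell has vertex-label sum `75`. -/
theorem stmt_3 :
    ∃ f : (Fin 4 → ℤ) → ℤ,
      Set.BijOn f ↑V24 (Set.Icc (1 : ℤ) 24) ∧
      ∀ c ∈ Centers24, ∑ v ∈ cell c, f v = 75 := by
  refine ⟨fLab, ⟨?_, ?_, ?_⟩, by decide⟩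
  · intro x hx
    rw [← Finset.coe_Icc, ← img]
    exact Finset.mem_coe.2 (Finset.mem_image_of_mem _ hx)
  · apply Finset.injOn_of_card_image_eq
    rw [img, cards]; decide
  · rw [← Finset.coe_Icc, ← img, Finset.coe_image]
    exact Set.Subset.rfl
end

section
/- Let V be the 24 vertices of the 24-cell with its 24 octahedral cells. There exists a function T : V → {0,1,2} such that each of the three values is attained by exactly 8 vertices and every octahedral cell contains each of the values 0, 1, 2 exactly twice among its six vertices. -/
open Finset

/-- Labeling by the unordered pair of nonzero coordinates. -/
def T24 (v : Fin 4 → ℤ) : Fin 3 :=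
  if v 0 * v 1 ≠ 0 ∨ v 2 * v 3 ≠ 0 then 0
  else if v 0 * v 2 ≠ 0 ∨ v 1 * v 3 ≠ 0 then 1
  else 2

/-- There is a ternary labeling of the vertices of the 24-cell in which each of the
three values is used exactly 8 times and every octahedral cell contains each value
exactly twice. -/
theorem stmt_8 :
    ∃ T : (Fin 4 → ℤ) → Fin 3,
      (∀ t : Fin 3, (V24.filter fun v => T v = t).card = 8) ∧
      ∀ c ∈ Centers24, ∀ t : Fin 3, ((cell c).filter fun v => T v = t).card = 2 := by
  exact ⟨T24, by decide, by decide⟩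
end

section
/- The 24 vertices of the 24-cell can be partitioned into three sets of 8 vertices, each of which is the vertex set of a 16-cell: within each set, any two distinct vertices u, v satisfy either u = −v or ⟨u,v⟩ = 0 (they are antipodal or orthogonal), and each set contains 4 antipodal pairs. -/
open Finset

/-- The 24 vertices of the 24-cell can be partitioned into three 8-element sets, each
the vertex set of a 16-cell: within each set any two distinct vertices are antipodal
or orthogonal, and each set consists of 4 antipodal pairs (it is closed under negation
with no self-antipodal vertex). -/
theorem stmt_9 :
    ∃ S : Fin 3 → Finset (Fin 4 → ℤ),
      (∀ t t' : Fin 3, t ≠ t' → Disjoint (S t) (S t')) ∧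
      S 0 ∪ S 1 ∪ S 2 = V24 ∧
      (∀ t, (S t).card = 8) ∧
      (∀ t, ∀ u ∈ S t, ∀ v ∈ S t, u ≠ v → u = -v ∨ ∑ i, u i * v i = 0) ∧
      (∀ t, ∀ v ∈ S t, -v ∈ S t ∧ v ≠ -v) := by
  refine ⟨![V24.filter (fun v => v 0 * v 1 ≠ 0 ∨ v 2 * v 3 ≠ 0),
            V24.filter (fun v => v 0 * v 2 ≠ 0 ∨ v 1 * v 3 ≠ 0),
            V24.filter (fun v => v 0 * v 3 ≠ 0 ∨ v 1 * v 2 ≠ 0)], ?_, ?_, ?_, ?_, ?_⟩ <;> decide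
end

section
/- Let V be the 24 vertices of the 24-cell with its 24 octahedral cells. Suppose B₁, B₂, B₃ : V → {0,1} are labelings such that every octahedral cell contains exactly three vertices with value 1 under each Bⱼ, suppose T : V → {0,1,2} is a labeling such that every octahedral cell contains each value of T exactly twice, and suppose the map v ↦ (B₁(v), B₂(v), B₃(v), T(v)) is injective on V (so all 24 combinations occur). Then each of the four functions f₁ = 12·B₁ + 6·B₂ + 3·B₃ + T + 1, f₂ = 12·B₁ + 6·B₂ + 2·T + B₃ + 1, f₃ = 12·B₁ + 4·T + 2·B₂ + B₃ + 1, and f₄ = 8·T + 4·B₁ + 2·B₂ + B₃ + 1 is a bijection from V onto {1, 2, …, 24} under which every octahedral cell has vertex-label sum 75. -/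
/-!
Each labeling is `p B₁ + q B₂ + r B₃ + w T + 1` for weights read off a mixed-radix numeral with
digits in `{0,1}³ × {0,1,2}`, so it is an injective code of the 24 digit tuples onto
`{1, …, 24}`; composed with the injective superimposition `v ↦ (B₁ v, B₂ v, B₃ v, T v)` it maps
the 24 vertices bijectively onto `{1, …, 24}`. On every cell each `Bⱼ` sums to `3` and `T` to
`2 · (0 + 1 + 2) = 6`, so a cell sum is `3 (p + q + r) + 6 w + 6`, which is `75` for all four
weight vectors.
-/

open Finset

section LabelSums

variable {α : Type*} {s : Finset α}

theorem sum_val_eq_sum_mul_card_filter {n : ℕ} (g : α → Fin n) :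
    ∑ v ∈ s, ((g v : ℕ) : ℤ) = ∑ t : Fin n, ((t : ℕ) : ℤ) * #{v ∈ s | g v = t} := by
  rw [← Finset.sum_fiberwise' s g fun t : Fin n => ((t : ℕ) : ℤ)]
  simp [mul_comm]

theorem sum_val_of_card_filter_eq_one {B : α → Fin 2} {k : ℕ} (h : #{v ∈ s | B v = 1} = k) :
    ∑ v ∈ s, ((B v : ℕ) : ℤ) = k := by
  simp [sum_val_eq_sum_mul_card_filter, Fin.sum_univ_two, h]

theorem sum_val_of_card_filter_eq {n : ℕ} {T : α → Fin n} {k : ℕ}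
    (h : ∀ t, #{v ∈ s | T v = t} = k) :
    ∑ v ∈ s, ((T v : ℕ) : ℤ) = k * ∑ t : Fin n, ((t : ℕ) : ℤ) := by
  rw [sum_val_eq_sum_mul_card_filter, Finset.mul_sum]
  exact Finset.sum_congr rfl fun t _ => by rw [h, mul_comm]

theorem sum_weighted_labels {B₁ B₂ B₃ : α → Fin 2} {T : α → Fin 3}
    (hB₁ : #{v ∈ s | B₁ v = 1} = 3) (hB₂ : #{v ∈ s | B₂ v = 1} = 3)
    (hB₃ : #{v ∈ s | B₃ v = 1} = 3) (hT : ∀ t, #{v ∈ s | T v = t} = 2) (p q r w : ℤ) :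
    ∑ v ∈ s, (p * ((B₁ v : ℕ) : ℤ) + q * ((B₂ v : ℕ) : ℤ) + r * ((B₃ v : ℕ) : ℤ) +
      w * ((T v : ℕ) : ℤ) + 1) = 3 * (p + q + r) + 6 * w + #s := by
  simp only [Finset.sum_add_distrib, ← Finset.mul_sum, sum_val_of_card_filter_eq_one hB₁,
    sum_val_of_card_filter_eq_one hB₂, sum_val_of_card_filter_eq_one hB₃,
    sum_val_of_card_filter_eq hT, Fin.sum_univ_three, Finset.sum_const, nsmul_eq_mul]
  norm_num
  ring

end LabelSums

theorem Finset.bijOn_comp_of_injOn_of_injective {α β γ : Type*} {s : Finset α} {t : Finset γ}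
    {φ : α → β} {e : β → γ} (hφ : Set.InjOn φ s) (he : Function.Injective e)
    (hmaps : ∀ x, e x ∈ t) (hcard : #t ≤ #s) : Set.BijOn (e ∘ φ) s t := by
  have hinj : Set.InjOn (e ∘ φ) s := he.comp_injOn hφ
  have hmapsTo : Set.MapsTo (e ∘ φ) s t := fun v _ => hmaps (φ v)
  exact ⟨hmapsTo, hinj, Finset.surjOn_of_injOn_of_card_le _ hmapsTo hinj hcard⟩

theorem card_V24 : #V24 = 24 := by decide

theorem card_cell : ∀ c ∈ Centers24, #(cell c) = 6 := by decide

def IsMagicLabeling (f : (Fin 4 → ℤ) → ℤ) : Prop :=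
  Set.BijOn f V24 (Set.Icc 1 24) ∧ ∀ c ∈ Centers24, ∑ v ∈ cell c, f v = 75

theorem isMagicLabeling_of_weights {B₁ B₂ B₃ : (Fin 4 → ℤ) → Fin 2} {T : (Fin 4 → ℤ) → Fin 3}
    (hB₁ : ∀ c ∈ Centers24, #{v ∈ cell c | B₁ v = 1} = 3)
    (hB₂ : ∀ c ∈ Centers24, #{v ∈ cell c | B₂ v = 1} = 3)
    (hB₃ : ∀ c ∈ Centers24, #{v ∈ cell c | B₃ v = 1} = 3)
    (hT : ∀ c ∈ Centers24, ∀ t : Fin 3, #{v ∈ cell c | T v = t} = 2)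
    (hinj : Set.InjOn (fun v => (B₁ v, B₂ v, B₃ v, T v)) ↑V24) (p q r w : ℤ)
    (hcode : Function.Injective fun x : Fin 2 × Fin 2 × Fin 2 × Fin 3 =>
      p * ((x.1 : ℕ) : ℤ) + q * ((x.2.1 : ℕ) : ℤ) + r * ((x.2.2.1 : ℕ) : ℤ) +
        w * ((x.2.2.2 : ℕ) : ℤ) + 1)
    (hrange : ∀ x : Fin 2 × Fin 2 × Fin 2 × Fin 3,
      p * ((x.1 : ℕ) : ℤ) + q * ((x.2.1 : ℕ) : ℤ) + r * ((x.2.2.1 : ℕ) : ℤ) +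
        w * ((x.2.2.2 : ℕ) : ℤ) + 1 ∈ Finset.Icc 1 24)
    (hweights : 3 * (p + q + r) + 6 * w + 6 = 75) :
    IsMagicLabeling fun v => p * ((B₁ v : ℕ) : ℤ) + q * ((B₂ v : ℕ) : ℤ) +
      r * ((B₃ v : ℕ) : ℤ) + w * ((T v : ℕ) : ℤ) + 1 := by
  refine ⟨?_, fun c hc => ?_⟩
  · rw [← Finset.coe_Icc]
    exact Finset.bijOn_comp_of_injOn_of_injective hinj hcode hrange (by simp [card_V24])
  · rw [sum_weighted_labels (hB₁ c hc) (hB₂ c hc) (hB₃ c hc) (hT c hc), card_cell c hc]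
    exact_mod_cast hweights

/-- Given three binary labelings `B₁, B₂, B₃` each putting exactly three `1`s on every
octahedral cell, and a ternary labeling `T` putting each of its values exactly twice on
every octahedral cell, such that the superimposition `v ↦ (B₁ v, B₂ v, B₃ v, T v)` is
injective on the vertices, each of the four linear combinations
`12B₁+6B₂+3B₃+T+1`, `12B₁+6B₂+2T+B₃+1`, `12B₁+4T+2B₂+B₃+1`, `8T+4B₁+2B₂+B₃+1`
is a magic 24-cell labeling: a bijection onto `{1, …, 24}` with all cell sums `75`. -/
theorem stmt_10 (B₁ B₂ B₃ : (Fin 4 → ℤ) → Fin 2) (T : (Fin 4 → ℤ) → Fin 3)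
    (hB₁ : ∀ c ∈ Centers24, ((cell c).filter fun v => B₁ v = 1).card = 3)
    (hB₂ : ∀ c ∈ Centers24, ((cell c).filter fun v => B₂ v = 1).card = 3)
    (hB₃ : ∀ c ∈ Centers24, ((cell c).filter fun v => B₃ v = 1).card = 3)
    (hT : ∀ c ∈ Centers24, ∀ t : Fin 3, ((cell c).filter fun v => T v = t).card = 2)
    (hinj : Set.InjOn (fun v => (B₁ v, B₂ v, B₃ v, T v)) ↑V24) :
    ∀ f ∈ ({fun v => 12 * ((B₁ v : ℕ) : ℤ) + 6 * ((B₂ v : ℕ) : ℤ) +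
              3 * ((B₃ v : ℕ) : ℤ) + ((T v : ℕ) : ℤ) + 1,
            fun v => 12 * ((B₁ v : ℕ) : ℤ) + 6 * ((B₂ v : ℕ) : ℤ) +
              2 * ((T v : ℕ) : ℤ) + ((B₃ v : ℕ) : ℤ) + 1,
            fun v => 12 * ((B₁ v : ℕ) : ℤ) + 4 * ((T v : ℕ) : ℤ) +
              2 * ((B₂ v : ℕ) : ℤ) + ((B₃ v : ℕ) : ℤ) + 1,
            fun v => 8 * ((T v : ℕ) : ℤ) + 4 * ((B₁ v : ℕ) : ℤ) +
              2 * ((B₂ v : ℕ) : ℤ) + ((B₃ v : ℕ) : ℤ) + 1} :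
          Set ((Fin 4 → ℤ) → ℤ)),
      Set.BijOn f ↑V24 (Set.Icc (1 : ℤ) 24) ∧
      ∀ c ∈ Centers24, ∑ v ∈ cell c, f v = 75 := by
  intro f hf
  change IsMagicLabeling f
  have hmagic := isMagicLabeling_of_weights hB₁ hB₂ hB₃ hT hinj
  simp only [Set.mem_insert_iff, Set.mem_singleton_iff] at hf
  rcases hf with rfl | rfl | rfl | rfl
  · convert hmagic 12 6 3 1 (by decide) (by decide) (by norm_num) using 2; ring
  · convert hmagic 12 6 1 2 (by decide) (by decide) (by norm_num) using 2; ring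
  · convert hmagic 12 2 1 4 (by decide) (by decide) (by norm_num) using 2; ring
  · convert hmagic 4 2 1 8 (by decide) (by decide) (by norm_num) using 2; ring
end

section
/- Let W = {±e₀, ±e₁, ±e₂, ±e₃} ⊂ ℤ⁴ be the 8 vertices of the 16-cell, whose 16 tetrahedral cells are the sets {ε₀e₀, ε₁e₁, ε₂e₂, ε₃e₃} for each choice of signs εᵢ ∈ {+1,−1}. There is no injective function f : W → ℤ such that all 16 tetrahedral cells have the same vertex-label sum. -/
open Finset

/-- The 8 vertices of the 16-cell: the vectors `±eᵢ` in `ℤ⁴`. -/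
def W16 : Finset (Fin 4 → ℤ) :=
  (Fintype.piFinset fun _ => ({-1, 0, 1} : Finset ℤ)).filter fun v => ∑ i, (v i) ^ 2 = 1

/-- The 16 sign vectors `(ε₀,ε₁,ε₂,ε₃)` with `εᵢ = ±1`. -/
def Signs4 : Finset (Fin 4 → ℤ) :=
  Fintype.piFinset fun _ => ({-1, 1} : Finset ℤ)

/-- The tetrahedral cell of the 16-cell determined by the signs `ε`: the set
`{ε₀e₀, ε₁e₁, ε₂e₂, ε₃e₃}`, i.e. the vertices `v` with `⟨v, ε⟩ = 1`. -/
def tet (ε : Fin 4 → ℤ) : Finset (Fin 4 → ℤ) :=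
  W16.filter fun v => ∑ i, v i * ε i = 1

lemma tetP : tet ![1,1,1,1] = {![1,0,0,0], ![0,1,0,0], ![0,0,1,0], ![0,0,0,1]} := by decide

lemma tetM : tet ![-1,1,1,1] = {![-1,0,0,0], ![0,1,0,0], ![0,0,1,0], ![0,0,0,1]} := by decide

/-- There is no injective integer labeling of the 8 vertices of the 16-cell making all
16 tetrahedral cells have the same vertex-label sum. -/
theorem stmt_13 :
    ¬ ∃ (f : (Fin 4 → ℤ) → ℤ) (S : ℤ),
        Set.InjOn f ↑W16 ∧ ∀ ε ∈ Signs4, ∑ v ∈ tet ε, f v = S := by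
  rintro ⟨f, S, hinj, hS⟩
  have h1 := hS ![1,1,1,1] (by decide)
  have h2 := hS ![-1,1,1,1] (by decide)
  rw [tetP] at h1
  rw [tetM] at h2
  rw [show ({![1,0,0,0], ![0,1,0,0], ![0,0,1,0], ![0,0,0,1]} : Finset (Fin 4 → ℤ)) = insert ![1,0,0,0] {![0,1,0,0], ![0,0,1,0], ![0,0,0,1]} from rfl,
    Finset.sum_insert (by decide)] at h1
  rw [show ({![-1,0,0,0], ![0,1,0,0], ![0,0,1,0], ![0,0,0,1]} : Finset (Fin 4 → ℤ)) = insert ![-1,0,0,0] {![0,1,0,0], ![0,0,1,0], ![0,0,0,1]} from rfl,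
    Finset.sum_insert (by decide)] at h2
  have heq : f ![1,0,0,0] = f ![-1,0,0,0] := by omega
  have := hinj (by decide) (by decide) heq
  have := congrFun this 0
  simp at this
end

section
/- Let O = {±e₀, ±e₁, ±e₂} ⊂ ℤ³ be the 6 vertices of the regular octahedron, whose 8 triangular faces are the sets {ε₀e₀, ε₁e₁, ε₂e₂} for each choice of signs εᵢ ∈ {+1,−1}. There is no injective function f : O → ℤ such that all 8 triangular faces have the same vertex-label sum. -/
open Finset

/-- The 6 vertices of the regular octahedron: the vectors `±eᵢ` in `ℤ³`. -/
def O6 : Finset (Fin 3 → ℤ) :=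
  (Fintype.piFinset fun _ => ({-1, 0, 1} : Finset ℤ)).filter fun v => ∑ i, (v i) ^ 2 = 1

/-- The 8 sign vectors `(ε₀,ε₁,ε₂)` with `εᵢ = ±1`. -/
def Signs3 : Finset (Fin 3 → ℤ) :=
  Fintype.piFinset fun _ => ({-1, 1} : Finset ℤ)

/-- The triangular face of the octahedron determined by the signs `ε`: the set
`{ε₀e₀, ε₁e₁, ε₂e₂}`, i.e. the vertices `v` with `⟨v, ε⟩ = 1`. -/
def triFace (ε : Fin 3 → ℤ) : Finset (Fin 3 → ℤ) :=
  O6.filter fun v => ∑ i, v i * ε i = 1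

lemma face1 : triFace ![1,1,1] = {![1,0,0], ![0,1,0], ![0,0,1]} := by decide
lemma face2 : triFace ![-1,1,1] = {![-1,0,0], ![0,1,0], ![0,0,1]} := by decide
lemma s1 : (![1,1,1] : Fin 3 → ℤ) ∈ Signs3 := by decide
lemma s2 : (![-1,1,1] : Fin 3 → ℤ) ∈ Signs3 := by decide
lemma m1 : (![1,0,0] : Fin 3 → ℤ) ∈ O6 := by decide
lemma m2 : (![-1,0,0] : Fin 3 → ℤ) ∈ O6 := by decide

/-- There is no injective integer labeling of the 6 vertices of the octahedron making
all 8 triangular faces have the same vertex-label sum. -/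
theorem stmt_14 :
    ¬ ∃ (f : (Fin 3 → ℤ) → ℤ) (S : ℤ),
        Set.InjOn f ↑O6 ∧ ∀ ε ∈ Signs3, ∑ v ∈ triFace ε, f v = S := by
  rintro ⟨f, S, hinj, h⟩
  have h1 := h _ s1
  have h2 := h _ s2
  rw [face1] at h1
  rw [face2] at h2
  rw [Finset.sum_insert (by decide), Finset.sum_insert (by decide),
    Finset.sum_singleton] at h1 h2
  have e1 : f ![1,0,0] = f ![-1,0,0] := by omega
  have := hinj m1 m2 e1
  have : (![1,0,0] : Fin 3 → ℤ) ≠ ![-1,0,0] := by decide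
  simp_all
end
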